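/- The functional U_H is sublinear on M+(X₁)×M+(X₂): for all μ_i', μ_i'' ∈ M+(X_i) and λ', λ'' ≥ 0 one has U_H(λ'μ₁'+λ''μ₁'', λ'μ₂'+λ''μ₂'') ≤ λ'·U_H(μ₁',μ₂') + λ''·U_H(μ₁'',μ₂''). -/

import Mathlib

open MeasureTheory Topology Filter Set
open scoped NNReal ENNReal BoundedContinuousFunction

noncomputable section

namespace UOT

variable (X : Type*)

/-- The equivalence relation on `X × ℝ≥0` identifying all points with radius `0`. -/
def coneSetoid : Setoid (X × ℝ≥0) where
  r p q := p = q ∨ (p.2 = 0 ∧ q.2 = 0)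
  iseqv := by
    refine ⟨fun p => Or.inl rfl, ?_, ?_⟩
    · rintro p q (rfl | h)
      · exact Or.inl rfl
      · exact Or.inr ⟨h.2, h.1⟩
    · rintro p q r hpq hqr
      rcases hpq with rfl | h
      · exact hqr
      · rcases hqr with rfl | h'
        · exact Or.inr h
        · exact Or.inr ⟨h.1, h'.2⟩

/-- The geometric cone over `X`. -/
def Cone := Quotient (coneSetoid X)

/-- The canonical map sending `(x, r)` to the point `[x, r]` of the cone. -/
def Cone.mk (x : X) (r : ℝ≥0) : Cone X := Quotient.mk (coneSetoid X) (x, r)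

/-- The vertex `o` of the cone. -/
def Cone.vertex [Nonempty X] : Cone X := Cone.mk X (Classical.arbitrary X) 0

/-- The radial coordinate `r` of a point of the cone. -/
def Cone.radius : Cone X → ℝ≥0 :=
  Quotient.lift (fun p => p.2) (by
    rintro p q (rfl | ⟨h1, h2⟩)
    · rfl
    · simp [h1, h2])

/-- The base point `x` of a point of the cone (an arbitrary point of `X` at the vertex). -/
def Cone.basePt [Nonempty X] : Cone X → X :=
  Quotient.lift (fun p => if p.2 = 0 then Classical.arbitrary X else p.1) (by
    rintro p q (rfl | ⟨h1, h2⟩)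
    · rfl
    · simp [h1, h2])

/-- Radial rescaling `λ • [x, r] = [x, λ * r]` on the cone. -/
def Cone.smul (c : ℝ≥0) : Cone X → Cone X :=
  Quotient.lift (fun p => Cone.mk X p.1 (c * p.2)) (by
    rintro p q (rfl | ⟨h1, h2⟩)
    · rfl
    · apply Quotient.sound
      exact Or.inr ⟨by simp [h1], by simp [h2]⟩)

variable [TopologicalSpace X]

/-- The cone topology: a set is open iff its preimage in `X × ℝ≥0` is open and, when it
contains the vertex, it contains a whole strip `{[x, r] : r < ε}`. -/
instance : TopologicalSpace (Cone X) where
  IsOpen U := IsOpen ((fun p : X × ℝ≥0 => Cone.mk X p.1 p.2) ⁻¹' U) ∧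
      ∀ x : X, Cone.mk X x 0 ∈ U →
        ∃ ε : ℝ≥0, 0 < ε ∧ ∀ (y : X) (r : ℝ≥0), r < ε → Cone.mk X y r ∈ U
  isOpen_univ := ⟨isOpen_univ, fun _ _ => ⟨1, one_pos, fun _ _ _ => mem_univ _⟩⟩
  isOpen_inter := by
    rintro s t ⟨hs1, hs2⟩ ⟨ht1, ht2⟩
    refine ⟨hs1.inter ht1, fun x hx => ?_⟩
    obtain ⟨ε₁, hε₁, h₁⟩ := hs2 x hx.1
    obtain ⟨ε₂, hε₂, h₂⟩ := ht2 x hx.2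
    exact ⟨min ε₁ ε₂, lt_min hε₁ hε₂, fun y r hr =>
      ⟨h₁ y r (hr.trans_le (min_le_left _ _)), h₂ y r (hr.trans_le (min_le_right _ _))⟩⟩
  isOpen_sUnion := by
    intro S hS
    constructor
    · rw [Set.preimage_sUnion]
      exact isOpen_biUnion fun t ht => (hS t ht).1
    · intro x hx
      obtain ⟨t, ht, hxt⟩ := hx
      obtain ⟨ε, hε, h⟩ := (hS t ht).2 x hxt
      exact ⟨ε, hε, fun y r hr => ⟨t, ht, h y r hr⟩⟩

instance : MeasurableSpace (Cone X) := borel (Cone X)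

instance : BorelSpace (Cone X) := ⟨rfl⟩

/-- On a product of cones we use the Borel σ-algebra of the product topology. -/
instance (priority := 2000) prodConeMeasurableSpace (X₁ X₂ : Type*) [TopologicalSpace X₁]
    [TopologicalSpace X₂] : MeasurableSpace (Cone X₁ × Cone X₂) :=
  borel (Cone X₁ × Cone X₂)

instance (priority := 2000) prodConeBorelSpace (X₁ X₂ : Type*) [TopologicalSpace X₁]
    [TopologicalSpace X₂] : BorelSpace (Cone X₁ × Cone X₂) := ⟨rfl⟩

variable {X}

/-- The scaled Dirac measure `r • δ_x` as a finite measure. -/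
def diracFM {Y : Type*} [MeasurableSpace Y] (x : Y) : FiniteMeasure Y :=
  ⟨Measure.dirac x, inferInstance⟩

/-- The canonical map `[x, r] ↦ r • δ_x` from the cone to finite measures. -/
def coneToFM (X : Type*) [TopologicalSpace X] [MeasurableSpace X] :
    Cone X → FiniteMeasure X :=
  Quotient.lift (fun p : X × ℝ≥0 => p.2 • diracFM p.1) (by
    rintro p q (rfl | ⟨h1, h2⟩)
    · rfl
    · simp [h1, h2])

/-- A finite measure is discrete if it is a finite nonnegative combination of Dirac masses. -/
def IsDiscreteFM {Y : Type*} [MeasurableSpace Y] (μ : FiniteMeasure Y) : Prop :=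
  ∃ (n : ℕ) (c : Fin n → ℝ≥0) (x : Fin n → Y), μ = ∑ i, c i • diracFM (x i)

section Product

variable {X₁ X₂ : Type*} [TopologicalSpace X₁] [TopologicalSpace X₂]

/-- Radial `1`-homogeneity of a cost function on the product cone. -/
def RadiallyHomogeneous (H : Cone X₁ × Cone X₂ → ℝ≥0∞) : Prop :=
  ∀ (x₁ : X₁) (x₂ : X₂) (r₁ r₂ lam : ℝ≥0), 0 < lam →
    H (Cone.mk X₁ x₁ (lam * r₁), Cone.mk X₂ x₂ (lam * r₂)) =
      (lam : ℝ≥0∞) * H (Cone.mk X₁ x₁ r₁, Cone.mk X₂ x₂ r₂)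

/-- Radial convexity of a cost function on the product cone: every radial section is convex. -/
def RadiallyConvex (H : Cone X₁ × Cone X₂ → ℝ≥0∞) : Prop :=
  ∀ (x₁ : X₁) (x₂ : X₂) (a₁ a₂ b₁ b₂ t : ℝ≥0), t ≤ 1 →
    H (Cone.mk X₁ x₁ (t * a₁ + (1 - t) * b₁), Cone.mk X₂ x₂ (t * a₂ + (1 - t) * b₂)) ≤
      (t : ℝ≥0∞) * H (Cone.mk X₁ x₁ a₁, Cone.mk X₂ x₂ a₂) +
        ((1 - t : ℝ≥0) : ℝ≥0∞) * H (Cone.mk X₁ x₁ b₁, Cone.mk X₂ x₂ b₂)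

/-- Properness: `H` is not identically `+∞`. -/
def ProperCost (H : Cone X₁ × Cone X₂ → ℝ≥0∞) : Prop := ∃ y, H y ≠ ⊤

variable [MeasurableSpace X₁] [MeasurableSpace X₂]

/-- First `p`-homogeneous marginal `h₁^p(α) = (x₁)_♯ (r₁^p · α)`. -/
def homMarginalFst [Nonempty X₁] (p : ℝ) (α : Measure (Cone X₁ × Cone X₂)) : Measure X₁ :=
  Measure.map (fun y : Cone X₁ × Cone X₂ => Cone.basePt X₁ y.1)
    (α.withDensity fun y => (Cone.radius X₁ y.1 : ℝ≥0∞) ^ p)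

/-- Second `p`-homogeneous marginal `h₂^p(α) = (x₂)_♯ (r₂^p · α)`. -/
def homMarginalSnd [Nonempty X₂] (p : ℝ) (α : Measure (Cone X₁ × Cone X₂)) : Measure X₂ :=
  Measure.map (fun y : Cone X₁ × Cone X₂ => Cone.basePt X₂ y.2)
    (α.withDensity fun y => (Cone.radius X₂ y.2 : ℝ≥0∞) ^ p)

variable [Nonempty X₁] [Nonempty X₂]

/-- `α ∈ H^p(μ₁, μ₂)`: a (finite Radon) homogeneous coupling with finite `p`-th radial
moments and `p`-homogeneous marginals `μ₁, μ₂`. -/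
def IsHomCoupling (p : ℝ) (α : Measure (Cone X₁ × Cone X₂))
    (μ₁ : Measure X₁) (μ₂ : Measure X₂) : Prop :=
  IsFiniteMeasure α ∧
    (∫⁻ y, ((Cone.radius X₁ y.1 : ℝ≥0∞) ^ p + (Cone.radius X₂ y.2 : ℝ≥0∞) ^ p) ∂α) ≠ ⊤ ∧
    homMarginalFst p α = μ₁ ∧ homMarginalSnd p α = μ₂

/-- The unbalanced optimal transport cost `U_H`. -/
def UH (H : Cone X₁ × Cone X₂ → ℝ≥0∞) (μ₁ : Measure X₁) (μ₂ : Measure X₂) : ℝ≥0∞ :=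
  ⨅ (α : Measure (Cone X₁ × Cone X₂)) (_ : IsHomCoupling 1 α μ₁ μ₂), ∫⁻ y, H y ∂α

/-- The truncated product cone `C_R[X₁, X₂]`: both radii at most `R`. -/
def prodConeTrunc (R : ℝ≥0) : Set (Cone X₁ × Cone X₂) :=
  {y | Cone.radius X₁ y.1 ≤ R ∧ Cone.radius X₂ y.2 ≤ R}

/-- Membership of a pair of bounded continuous potentials in the dual constraint set `Φ_H`. -/
def InPhi (H : Cone X₁ × Cone X₂ → ℝ≥0∞) (φ₁ : X₁ →ᵇ ℝ) (φ₂ : X₂ →ᵇ ℝ) : Prop :=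
  ∀ (x₁ : X₁) (x₂ : X₂) (r₁ r₂ : ℝ≥0),
    ENNReal.ofReal (φ₁ x₁ * r₁ + φ₂ x₂ * r₂) ≤ H (Cone.mk X₁ x₁ r₁, Cone.mk X₂ x₂ r₂)

/-- `H`-cyclical monotonicity of a subset of the product cone. -/
def HCyclicallyMonotone (H : Cone X₁ × Cone X₂ → ℝ≥0∞)
    (Γ : Set (Cone X₁ × Cone X₂)) : Prop :=
  ∀ (N : ℕ) (y : Fin N → Cone X₁ × Cone X₂), (∀ i, y i ∈ Γ) → ∀ σ : Equiv.Perm (Fin N),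
    ∑ i, H (y i) ≤ ∑ i, H ((y i).1, (y (σ i)).2)

/-- A radial convex cone in the product cone. -/
def IsRadialConvexCone (Γ : Set (Cone X₁ × Cone X₂)) : Prop :=
  ∀ (x₁ : X₁) (x₂ : X₂) (a₁ a₂ b₁ b₂ lam mu : ℝ≥0),
    (Cone.mk X₁ x₁ a₁, Cone.mk X₂ x₂ a₂) ∈ Γ → (Cone.mk X₁ x₁ b₁, Cone.mk X₂ x₂ b₂) ∈ Γ →
      (Cone.mk X₁ x₁ (lam * a₁ + mu * b₁), Cone.mk X₂ x₂ (lam * a₂ + mu * b₂)) ∈ Γ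

end Product

/-- Convexity (with scalars in `ℝ≥0`) of an `ℝ≥0∞`-valued function on a module. -/
def ConvexENN {E : Type*} [AddCommMonoid E] [SMul ℝ≥0 E] (f : E → ℝ≥0∞) : Prop :=
  ∀ (a b : E) (t : ℝ≥0), t ≤ 1 →
    f (t • a + (1 - t) • b) ≤ (t : ℝ≥0∞) * f a + ((1 - t : ℝ≥0) : ℝ≥0∞) * f b

/-- The lower semicontinuous convex envelope: the largest lsc convex function below `F`. -/
def lscConvexHull {E : Type*} [TopologicalSpace E] [AddCommMonoid E] [SMul ℝ≥0 E]
    (F : E → ℝ≥0∞) : E → ℝ≥0∞ :=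
  fun e => ⨆ (g : E → ℝ≥0∞) (_ : LowerSemicontinuous g ∧ ConvexENN g ∧ g ≤ F), g e

/-- The convex envelope: the largest convex function below `F`. -/
def convexHullFn {E : Type*} [AddCommMonoid E] [SMul ℝ≥0 E] (F : E → ℝ≥0∞) : E → ℝ≥0∞ :=
  fun e => ⨆ (g : E → ℝ≥0∞) (_ : ConvexENN g ∧ g ≤ F), g e

/-- The lower semicontinuous envelope: the largest lsc function below `F`. -/
def lscHull {E : Type*} [TopologicalSpace E] (F : E → ℝ≥0∞) : E → ℝ≥0∞ :=
  fun e => ⨆ (g : E → ℝ≥0∞) (_ : LowerSemicontinuous g ∧ g ≤ F), g e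

end UOT
set_option linter.unusedSectionVars false

namespace UOT

section AuxTop

variable {X : Type*} [TopologicalSpace X]


lemma isOpen_cone_iff {s : Set (Cone X)} :
    IsOpen s ↔ (IsOpen ((fun p : X × ℝ≥0 => Cone.mk X p.1 p.2) ⁻¹' s) ∧
      ∀ x : X, Cone.mk X x 0 ∈ s →
        ∃ ε : ℝ≥0, 0 < ε ∧ ∀ (y : X) (r : ℝ≥0), r < ε → Cone.mk X y r ∈ s) := Iff.rfl

lemma coneMk_eq_iff {x y : X} {r s : ℝ≥0} :
    Cone.mk X x r = Cone.mk X y s ↔ ((x, r) = (y, s) ∨ (r = 0 ∧ s = 0)) :=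
  ⟨fun h => Quotient.exact h, fun h => Quotient.sound h⟩

@[simp] lemma radius_mk (x : X) (r : ℝ≥0) : Cone.radius X (Cone.mk X x r) = r := rfl
@[simp] lemma basePt_mk [Nonempty X] (x : X) (r : ℝ≥0) :
    Cone.basePt X (Cone.mk X x r) = if r = 0 then Classical.arbitrary X else x := rfl
@[simp] lemma smul_mk (c : ℝ≥0) (x : X) (r : ℝ≥0) :
    Cone.smul X c (Cone.mk X x r) = Cone.mk X x (c * r) := rfl
lemma quotMk_eq (p : X × ℝ≥0) : Quotient.mk (coneSetoid X) p = Cone.mk X p.1 p.2 := rfl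

instance [Nonempty X] : Nonempty (Cone X) := ⟨Cone.mk X (Classical.arbitrary X) 0⟩

lemma continuous_coneMk : Continuous (fun p : X × ℝ≥0 => Cone.mk X p.1 p.2) :=
  continuous_def.mpr fun _ hs => hs.1

lemma continuous_radius : Continuous (Cone.radius X) := by
  rw [continuous_def]
  intro V hV
  rw [isOpen_cone_iff]
  constructor
  · exact hV.preimage continuous_snd
  · intro x hx
    obtain ⟨u, hu, hsub⟩ := exists_Ico_subset_of_mem_nhds (hV.mem_nhds hx) ⟨1, one_pos⟩
    exact ⟨u, hu, fun y r hr => hsub ⟨zero_le, hr⟩⟩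

lemma continuous_coneSmul (c : ℝ≥0) : Continuous (Cone.smul X c) := by
  rw [continuous_def]
  intro V hV
  rw [isOpen_cone_iff]
  constructor
  · have h : Continuous (fun p : X × ℝ≥0 => (p.1, c * p.2)) :=
      continuous_fst.prodMk (continuous_const.mul continuous_snd)
    exact hV.1.preimage h
  · intro x hx
    have hx' : Cone.mk X x 0 ∈ V := by
      simpa [mul_zero] using hx
    obtain ⟨ε, hε, hεV⟩ := hV.2 x hx'
    rcases eq_or_ne c 0 with rfl | hc
    · exact ⟨1, one_pos, fun y r _ => by
        simp only [mem_preimage, smul_mk, zero_mul]; exact hεV y 0 hε⟩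
    · refine ⟨ε / c, div_pos hε (pos_iff_ne_zero.mpr hc), fun y r hr => ?_⟩
      simp only [mem_preimage, smul_mk]
      apply hεV
      calc c * r < c * (ε / c) := by
            exact mul_lt_mul_of_pos_left hr (pos_iff_ne_zero.mpr hc)
        _ = ε := by rw [mul_comm, div_mul_cancel₀ _ hc]

lemma measurable_basePt [Nonempty X] [MeasurableSpace X] [BorelSpace X] :
    Measurable (Cone.basePt X) := by
  apply measurable_of_isOpen
  intro S hS
  set V : Set (Cone X) := (fun p : X × ℝ≥0 => Cone.mk X p.1 p.2) '' (S ×ˢ {r : ℝ≥0 | r ≠ 0})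
    with hVdef
  have hmemV : ∀ (x : X) (r : ℝ≥0), Cone.mk X x r ∈ V ↔ (x ∈ S ∧ r ≠ 0) := by
    intro x r
    constructor
    · rintro ⟨⟨x', r'⟩, ⟨hx', hr'⟩, heq⟩
      rcases coneMk_eq_iff.mp heq with heq | ⟨h0, _⟩
      · obtain ⟨rfl, rfl⟩ := Prod.mk.injEq .. ▸ Prod.ext_iff.mp heq
        exact ⟨hx', hr'⟩
      · exact absurd h0 hr'
    · rintro ⟨hx, hr⟩
      exact ⟨(x, r), ⟨hx, hr⟩, rfl⟩
  have hVopen : IsOpen V := by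
    rw [isOpen_cone_iff]
    constructor
    · have : (fun p : X × ℝ≥0 => Cone.mk X p.1 p.2) ⁻¹' V = S ×ˢ {r : ℝ≥0 | r ≠ 0} := by
        ext ⟨x, r⟩
        simpa using hmemV x r
      rw [this]
      exact hS.prod (isOpen_ne_fun continuous_id continuous_const)
    · intro x hx
      rcases (hmemV x 0).mp hx with ⟨_, h0⟩
      exact absurd rfl h0
  by_cases harb : Classical.arbitrary X ∈ S
  · have : Cone.basePt X ⁻¹' S = V ∪ (Cone.radius X ⁻¹' {0}) := by
      ext c
      induction c using Quotient.inductionOn with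
      | _ p =>
        obtain ⟨x, r⟩ := p
        rw [quotMk_eq]
        rcases eq_or_ne r 0 with rfl | hr
        · simp [harb, hmemV]
        · simp [hr, hmemV]
    rw [this]
    exact hVopen.measurableSet.union
      ((isClosed_singleton.preimage continuous_radius).measurableSet)
  · have : Cone.basePt X ⁻¹' S = V := by
      ext c
      induction c using Quotient.inductionOn with
      | _ p =>
        obtain ⟨x, r⟩ := p
        rw [quotMk_eq]
        rcases eq_or_ne r 0 with rfl | hr
        · simp [harb, hmemV]
        · simp [hr, hmemV]
    rw [this]
    exact hVopen.measurableSet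

lemma basePt_smul [Nonempty X] {lam : ℝ≥0} (hlam : lam ≠ 0) (c : Cone X) :
    Cone.basePt X (Cone.smul X lam c) = Cone.basePt X c := by
  induction c using Quotient.inductionOn with
  | _ p =>
    obtain ⟨x, r⟩ := p
    rw [quotMk_eq, smul_mk, basePt_mk, basePt_mk]
    simp [mul_eq_zero, hlam]

lemma radius_smul (lam : ℝ≥0) (c : Cone X) :
    Cone.radius X (Cone.smul X lam c) = lam * Cone.radius X c := by
  induction c using Quotient.inductionOn with
  | _ p => rfl


end AuxTop

end UOT


namespace UOT

section AuxMeasure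

variable {X₁ X₂ : Type*} [TopologicalSpace X₁] [TopologicalSpace X₂]
  [MeasurableSpace X₁] [BorelSpace X₁] [MeasurableSpace X₂] [BorelSpace X₂]
  [Nonempty X₁] [Nonempty X₂]

lemma measurable_basePtFst :
    Measurable (fun y : Cone X₁ × Cone X₂ => Cone.basePt X₁ y.1) :=
  measurable_basePt.comp continuous_fst.measurable

lemma measurable_basePtSnd :
    Measurable (fun y : Cone X₁ × Cone X₂ => Cone.basePt X₂ y.2) :=
  measurable_basePt.comp continuous_snd.measurable

lemma measurable_radiusFst :
    Measurable (fun y : Cone X₁ × Cone X₂ => (Cone.radius X₁ y.1 : ℝ≥0∞)) :=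
  (ENNReal.continuous_coe.comp (continuous_radius.comp continuous_fst)).measurable

lemma measurable_radiusSnd :
    Measurable (fun y : Cone X₁ × Cone X₂ => (Cone.radius X₂ y.2 : ℝ≥0∞)) :=
  (ENNReal.continuous_coe.comp (continuous_radius.comp continuous_snd)).measurable

/-- Radial dilation of the product cone. -/
def coneDil (lam : ℝ≥0) (y : Cone X₁ × Cone X₂) : Cone X₁ × Cone X₂ :=
  (Cone.smul X₁ lam y.1, Cone.smul X₂ lam y.2)

lemma measurable_coneDil (lam : ℝ≥0) :
    Measurable (coneDil (X₁ := X₁) (X₂ := X₂) lam) :=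
  (((continuous_coneSmul lam).comp continuous_fst).prodMk
    ((continuous_coneSmul lam).comp continuous_snd)).measurable

lemma homMarginalFst_add (α β : Measure (Cone X₁ × Cone X₂)) :
    homMarginalFst 1 (α + β) =
      homMarginalFst (X₁ := X₁) (X₂ := X₂) 1 α + homMarginalFst 1 β := by
  unfold homMarginalFst
  rw [withDensity_add_measure, Measure.map_add _ _ measurable_basePtFst]

lemma homMarginalSnd_add (α β : Measure (Cone X₁ × Cone X₂)) :
    homMarginalSnd 1 (α + β) =
      homMarginalSnd (X₁ := X₁) (X₂ := X₂) 1 α + homMarginalSnd 1 β := by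
  unfold homMarginalSnd
  rw [withDensity_add_measure, Measure.map_add _ _ measurable_basePtSnd]

lemma homMarginalFst_dil {lam : ℝ≥0} (hlam : lam ≠ 0)
    (α : Measure (Cone X₁ × Cone X₂)) :
    homMarginalFst 1 (Measure.map (coneDil lam) α) = lam • homMarginalFst 1 α := by
  ext S hS
  unfold homMarginalFst
  simp only [ENNReal.rpow_one]
  rw [Measure.smul_apply, Measure.map_apply measurable_basePtFst hS,
    Measure.map_apply measurable_basePtFst hS,
    withDensity_apply _ (measurable_basePtFst hS),
    withDensity_apply _ (measurable_basePtFst hS),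
    setLIntegral_map (measurable_basePtFst hS) measurable_radiusFst
      (measurable_coneDil lam)]
  have hpre : coneDil lam ⁻¹' ((fun y : Cone X₁ × Cone X₂ => Cone.basePt X₁ y.1) ⁻¹' S)
      = (fun y : Cone X₁ × Cone X₂ => Cone.basePt X₁ y.1) ⁻¹' S := by
    ext y
    simp [coneDil, basePt_smul hlam]
  rw [hpre]
  have hint : ∀ y : Cone X₁ × Cone X₂,
      ((Cone.radius X₁ (coneDil lam y).1 : ℝ≥0∞)) =
        (lam : ℝ≥0∞) * (Cone.radius X₁ y.1 : ℝ≥0∞) := by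
    intro y
    rw [coneDil]
    simp [radius_smul]
  rw [setLIntegral_congr_fun (measurable_basePtFst hS)
      (fun y _ => hint y),
    lintegral_const_mul _ measurable_radiusFst, ENNReal.smul_def, smul_eq_mul]

lemma homMarginalSnd_dil {lam : ℝ≥0} (hlam : lam ≠ 0)
    (α : Measure (Cone X₁ × Cone X₂)) :
    homMarginalSnd 1 (Measure.map (coneDil lam) α) = lam • homMarginalSnd 1 α := by
  ext S hS
  unfold homMarginalSnd
  simp only [ENNReal.rpow_one]
  rw [Measure.smul_apply, Measure.map_apply measurable_basePtSnd hS,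
    Measure.map_apply measurable_basePtSnd hS,
    withDensity_apply _ (measurable_basePtSnd hS),
    withDensity_apply _ (measurable_basePtSnd hS),
    setLIntegral_map (measurable_basePtSnd hS) measurable_radiusSnd
      (measurable_coneDil lam)]
  have hpre : coneDil lam ⁻¹' ((fun y : Cone X₁ × Cone X₂ => Cone.basePt X₂ y.2) ⁻¹' S)
      = (fun y : Cone X₁ × Cone X₂ => Cone.basePt X₂ y.2) ⁻¹' S := by
    ext y
    simp [coneDil, basePt_smul hlam]
  rw [hpre]
  have hint : ∀ y : Cone X₁ × Cone X₂,
      ((Cone.radius X₂ (coneDil lam y).2 : ℝ≥0∞)) =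
        (lam : ℝ≥0∞) * (Cone.radius X₂ y.2 : ℝ≥0∞) := by
    intro y
    rw [coneDil]
    simp [radius_smul]
  rw [setLIntegral_congr_fun (measurable_basePtSnd hS)
      (fun y _ => hint y),
    lintegral_const_mul _ measurable_radiusSnd, ENNReal.smul_def, smul_eq_mul]

lemma isHomCoupling_zero :
    IsHomCoupling (X₁ := X₁) (X₂ := X₂) 1 0 0 0 := by
  refine ⟨inferInstance, by simp, ?_, ?_⟩
  · unfold homMarginalFst
    simp
  · unfold homMarginalSnd
    simp

lemma isHomCoupling_add {α β : Measure (Cone X₁ × Cone X₂)}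
    {μ₁ ν₁ : Measure X₁} {μ₂ ν₂ : Measure X₂}
    (hα : IsHomCoupling 1 α μ₁ μ₂) (hβ : IsHomCoupling 1 β ν₁ ν₂) :
    IsHomCoupling 1 (α + β) (μ₁ + ν₁) (μ₂ + ν₂) := by
  obtain ⟨hαf, hαm, hα1, hα2⟩ := hα
  obtain ⟨hβf, hβm, hβ1, hβ2⟩ := hβ
  refine ⟨by exact MeasureTheory.isFiniteMeasureAdd, ?_, ?_, ?_⟩
  · rw [lintegral_add_measure]
    exact ENNReal.add_ne_top.mpr ⟨hαm, hβm⟩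
  · rw [homMarginalFst_add, hα1, hβ1]
  · rw [homMarginalSnd_add, hα2, hβ2]

lemma isHomCoupling_dil {lam : ℝ≥0} (hlam : lam ≠ 0)
    {α : Measure (Cone X₁ × Cone X₂)} {μ₁ : Measure X₁} {μ₂ : Measure X₂}
    (hα : IsHomCoupling 1 α μ₁ μ₂) :
    IsHomCoupling 1 (Measure.map (coneDil lam) α) (lam • μ₁) (lam • μ₂) := by
  obtain ⟨hαf, hαm, hα1, hα2⟩ := hα
  refine ⟨Measure.isFiniteMeasure_map α _, ?_, ?_, ?_⟩
  · rw [lintegral_map (show Measurable (fun y : Cone X₁ × Cone X₂ =>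
        (Cone.radius X₁ y.1 : ℝ≥0∞) ^ (1:ℝ) + (Cone.radius X₂ y.2 : ℝ≥0∞) ^ (1:ℝ)) from
      (measurable_radiusFst.pow_const _).add
      (measurable_radiusSnd.pow_const _)) (measurable_coneDil lam)]
    simp only [ENNReal.rpow_one]
    have hint : ∀ y : Cone X₁ × Cone X₂,
        ((Cone.radius X₁ (coneDil lam y).1 : ℝ≥0∞) +
          (Cone.radius X₂ (coneDil lam y).2 : ℝ≥0∞)) =
        (lam : ℝ≥0∞) * ((Cone.radius X₁ y.1 : ℝ≥0∞) + (Cone.radius X₂ y.2 : ℝ≥0∞)) := by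
      intro y
      rw [coneDil]
      simp [radius_smul, mul_add]
    rw [lintegral_congr hint,
      lintegral_const_mul _ (show Measurable (fun y : Cone X₁ × Cone X₂ =>
        (Cone.radius X₁ y.1 : ℝ≥0∞) + (Cone.radius X₂ y.2 : ℝ≥0∞)) from
        measurable_radiusFst.add measurable_radiusSnd)]
    simp only [ENNReal.rpow_one] at hαm
    exact ENNReal.mul_ne_top ENNReal.coe_ne_top hαm
  · rw [homMarginalFst_dil hlam, hα1]
  · rw [homMarginalSnd_dil hlam, hα2]

end AuxMeasure

end UOT


namespace UOT

section AuxUH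

variable {X₁ X₂ : Type*} [TopologicalSpace X₁] [TopologicalSpace X₂]
  [MeasurableSpace X₁] [BorelSpace X₁] [MeasurableSpace X₂] [BorelSpace X₂]
  [Nonempty X₁] [Nonempty X₂]

lemma lintegral_H_dil {H : Cone X₁ × Cone X₂ → ℝ≥0∞} (hlsc : LowerSemicontinuous H)
    (hhom : RadiallyHomogeneous H) {lam : ℝ≥0} (hlam : lam ≠ 0)
    (α : Measure (Cone X₁ × Cone X₂)) :
    ∫⁻ y, H y ∂(Measure.map (coneDil lam) α) = (lam : ℝ≥0∞) * ∫⁻ y, H y ∂α := by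
  rw [lintegral_map hlsc.measurable (measurable_coneDil lam),
    ← lintegral_const_mul _ hlsc.measurable]
  refine lintegral_congr fun y => ?_
  obtain ⟨y₁, y₂⟩ := y
  induction y₁ using Quotient.inductionOn with
  | _ p =>
    induction y₂ using Quotient.inductionOn with
    | _ q =>
      obtain ⟨x₁, r₁⟩ := p
      obtain ⟨x₂, r₂⟩ := q
      rw [quotMk_eq, quotMk_eq]
      show H (Cone.smul X₁ lam (Cone.mk X₁ x₁ r₁), Cone.smul X₂ lam (Cone.mk X₂ x₂ r₂)) = _
      rw [smul_mk, smul_mk]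
      exact hhom x₁ x₂ r₁ r₂ lam (pos_iff_ne_zero.mpr hlam)

lemma UH_zero_le (H : Cone X₁ × Cone X₂ → ℝ≥0∞) :
    UH H (0 : Measure X₁) (0 : Measure X₂) ≤ 0 := by
  unfold UH
  refine le_trans (iInf₂_le 0 ?_) ?_
  · exact isHomCoupling_zero
  · simp

lemma UH_smul_le {H : Cone X₁ × Cone X₂ → ℝ≥0∞} (hlsc : LowerSemicontinuous H)
    (hhom : RadiallyHomogeneous H) (lam : ℝ≥0) (μ₁ : Measure X₁) (μ₂ : Measure X₂) :
    UH H (lam • μ₁) (lam • μ₂) ≤ (lam : ℝ≥0∞) * UH H μ₁ μ₂ := by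
  rcases eq_or_ne lam 0 with rfl | hlam
  · simp only [zero_smul, ENNReal.coe_zero, zero_mul]
    exact UH_zero_le H
  · unfold UH
    rw [ENNReal.mul_iInf_of_ne (by exact_mod_cast hlam) ENNReal.coe_ne_top]
    refine le_iInf fun α => ?_
    rw [ENNReal.mul_iInf_of_ne (by exact_mod_cast hlam) ENNReal.coe_ne_top]
    refine le_iInf fun hα => ?_
    exact le_trans (iInf₂_le (Measure.map (coneDil lam) α) (isHomCoupling_dil hlam hα))
      (le_of_eq (lintegral_H_dil hlsc hhom hlam α))

lemma UH_add_le (H : Cone X₁ × Cone X₂ → ℝ≥0∞)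
    (μ₁ ν₁ : Measure X₁) (μ₂ ν₂ : Measure X₂) :
    UH H (μ₁ + ν₁) (μ₂ + ν₂) ≤ UH H μ₁ μ₂ + UH H ν₁ ν₂ := by
  unfold UH
  simp only [ENNReal.iInf_add, ENNReal.add_iInf]
  refine le_iInf fun α => le_iInf fun hα => le_iInf fun β => le_iInf fun hβ => ?_
  refine le_trans (iInf₂_le (β + α) ?_) (le_of_eq ?_)
  · exact isHomCoupling_add hβ hα
  · exact lintegral_add_measure _ β α

end AuxUH

end UOT

namespace UOT

/-- Sublinearity of `U_H` on `M₊(X₁) × M₊(X₂)`: for all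
`μᵢ', μᵢ'' ∈ M₊(Xᵢ)` and `λ', λ'' ≥ 0`,
`U_H(λ'μ₁' + λ''μ₁'', λ'μ₂' + λ''μ₂'') ≤ λ'·U_H(μ₁',μ₂') + λ''·U_H(μ₁'',μ₂'')`. -/
theorem UH_sublinear
    {X₁ X₂ : Type*} [TopologicalSpace X₁] [TopologicalSpace X₂]
    [T2Space X₁] [T2Space X₂] [CompletelyRegularSpace X₁] [CompletelyRegularSpace X₂]
    [MeasurableSpace X₁] [BorelSpace X₁] [MeasurableSpace X₂] [BorelSpace X₂]
    [Nonempty X₁] [Nonempty X₂]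
    (H : Cone X₁ × Cone X₂ → ℝ≥0∞) (hproper : ProperCost H)
    (hhom : RadiallyHomogeneous H) (hlsc : LowerSemicontinuous H)
    (μ₁' μ₁'' : FiniteMeasure X₁) (μ₂' μ₂'' : FiniteMeasure X₂) (l' l'' : ℝ≥0) :
    UH H ((l' • μ₁' + l'' • μ₁'' : FiniteMeasure X₁) : Measure X₁)
        ((l' • μ₂' + l'' • μ₂'' : FiniteMeasure X₂) : Measure X₂) ≤
      (l' : ℝ≥0∞) * UH H (μ₁' : Measure X₁) (μ₂' : Measure X₂) +
        (l'' : ℝ≥0∞) * UH H (μ₁'' : Measure X₁) (μ₂'' : Measure X₂) := by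
  have h1 : ((l' • μ₁' + l'' • μ₁'' : FiniteMeasure X₁) : Measure X₁)
      = l' • (μ₁' : Measure X₁) + l'' • (μ₁'' : Measure X₁) := by
    simp [FiniteMeasure.toMeasure_add, FiniteMeasure.toMeasure_smul]
  have h2 : ((l' • μ₂' + l'' • μ₂'' : FiniteMeasure X₂) : Measure X₂)
      = l' • (μ₂' : Measure X₂) + l'' • (μ₂'' : Measure X₂) := by
    simp [FiniteMeasure.toMeasure_add, FiniteMeasure.toMeasure_smul]
  rw [h1, h2]
  exact le_trans (UH_add_le H _ _ _ _)
    (add_le_add (UH_smul_le hlsc hhom l' _ _) (UH_smul_le hlsc hhom l'' _ _))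

end UOT
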